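/- Let Γ be a nontrivial group and Λ ≤ Γ a subgroup of finite index. Then genrk(Γ) ≤ genrk(Λ) + [Γ:Λ] − 1 and genrk(Λ) ≤ [Γ:Λ]·(genrk(Γ) − 1) + 1. -/

import Mathlib

open scoped commutatorElement

/-- The mixed commutator length `cl_{G,N}` (∞ if not a product of mixed commutators). -/
noncomputable def clGN {G : Type*} [Group G] (N : Subgroup G) (x : G) : ℕ∞ :=
  sInf {n : ℕ∞ | ∃ k : ℕ, n = k ∧ ∃ g v : Fin k → G, (∀ i, v i ∈ N) ∧
    x = (List.ofFn fun i => ⁅g i, v i⁆).prod}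

/-- The rank of a subgroup: minimal size of a generating set. -/
noncomputable def rk {G : Type*} [Group G] (H : Subgroup G) : ℕ∞ :=
  sInf {n : ℕ∞ | ∃ S : Finset G, Subgroup.closure (S : Set G) = H ∧ n = S.card}

/-- The intermediate rank `intrk^Γ(Λ) = inf {rk Θ | Λ ≤ Θ ≤ Γ}`. -/
noncomputable def intrk {G : Type*} [Group G] (Λ : Subgroup G) : ℕ∞ :=
  sInf {n : ℕ∞ | ∃ Θ : Subgroup G, Λ ≤ Θ ∧ n = rk Θ}

/-- The general rank in the sense of Malcev. -/
noncomputable def genrk (G : Type*) [Group G] : ℕ∞ :=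
  sSup {n : ℕ∞ | ∃ Λ : Subgroup G, Λ.FG ∧ n = intrk Λ}

/-- The special rank in the sense of Malcev. -/
noncomputable def sperk (G : Type*) [Group G] : ℕ∞ :=
  sSup {n : ℕ∞ | ∃ Λ : Subgroup G, Λ.FG ∧ n = rk Λ}

/-!
For a finitely generated `M ≤ Γ`, the subgroup `Λ ⊓ M` has finite index in `M`, hence is finitely
generated and lies in some `Θ ≤ Λ` with `rk Θ ≤ genrk Λ`; together with the `[M : Λ ⊓ M] - 1`
nontrivial elements of a right transversal, generators of `Θ` generate a subgroup containing `M`.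
For a finitely generated `M ≤ Λ`, take `Θ ≥ M` in `Γ` with `rk Θ ≤ genrk Γ`; then `M ≤ Λ ⊓ Θ`, to
which the sharp Schreier bound `rk (Λ ⊓ Θ) ≤ [Θ : Λ ⊓ Θ] (rk Θ - 1) + 1` applies.

The sharp Schreier bound uses a transversal `R` grown greedily from `{1}`: as long as `R` misses a
coset, some `r s` or `r s⁻¹` (`r ∈ R`, `s` a generator) lies in a new one and is added. Each step
creates a pair `(r', s)` with `r' s ∈ R`, whose Schreier generator is trivial, so at least
`[G : H] - 1` of the `[G : H] · |S|` Schreier generators can be dropped.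
-/

open scoped Finset

namespace Subgroup

variable {G : Type*} [Group G] (H K : Subgroup G)

variable {H} in
theorem IsComplement.toRightFun_coe {T : Set G} (hT : IsComplement (H : Set G) T) (t : T) :
    hT.toRightFun t = t :=
  (isComplement_iff_existsUnique_mul_inv_mem.mp hT t).unique (hT.mul_inv_toRightFun_mem t)
    (by simp)

theorem relIndex_le_index [H.FiniteIndex] : H.relIndex K ≤ H.index :=
  H.relIndex_top_right ▸
    relIndex_le_of_le_right le_top (H.relIndex_top_right ▸ FiniteIndex.index_ne_zero)

theorem exists_finset_card_add_one_eq_relIndex_le_sup [(H.subgroupOf K).FiniteIndex] :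
    ∃ R : Finset G, #R + 1 = H.relIndex K ∧ K ≤ H ⊓ K ⊔ closure (R : Set G) := by
  classical
  obtain ⟨R₀, hR, hR1⟩ := (H.subgroupOf K).exists_isComplement_right 1
  let R := (hR.finite_right.toFinset.erase 1).map ⟨K.subtype, K.subtype_injective⟩
  refine ⟨R, ?_, fun x hx => ?_⟩
  · have h1 : 1 ∈ hR.finite_right.toFinset := by simpa using hR1
    rw [Finset.card_map, Finset.card_erase_add_one h1,
      ← Set.ncard_eq_toFinset_card R₀ hR.finite_right, hR.ncard_right, relIndex]
  obtain ⟨r, hxr, -⟩ := isComplement_iff_existsUnique_mul_inv_mem.mp hR ⟨x, hx⟩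
  have hr : (r : G) ∈ closure (R : Set G) := by
    by_cases hr1 : (r : K) = 1
    · simp [hr1]
    · exact subset_closure (by simp [R, hr1])
  have hxr' : x * (r : G)⁻¹ ∈ H ⊓ K := ⟨mem_subgroupOf.mp hxr, K.mul_mem hx (K.inv_mem r.1.2)⟩
  simpa using mul_mem (mem_sup_left hxr') (mem_sup_right hr)

theorem card_le_index_of_mul_inv_mem [H.FiniteIndex] {R : Finset G}
    (hR : ∀ a ∈ R, ∀ b ∈ R, a * b⁻¹ ∈ H → a = b) : #R ≤ H.index := by
  let := H.fintypeQuotientOfFiniteIndex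
  rw [index_eq_card, Nat.card_eq_fintype_card]
  refine Finset.card_le_card_of_injOn (fun g => ((g⁻¹ : G) : G ⧸ H)) (by simp) ?_
  intro a ha b hb hab
  refine hR a ha b hb ?_
  simpa using QuotientGroup.eq.mp hab

theorem exists_mul_inv_mem_of_forall_mul_mem {R S : Set G} (hS : closure S = ⊤) (hR1 : 1 ∈ R)
    (hR : ∀ a ∈ R, ∀ s ∈ S, (∃ r ∈ R, a * s * r⁻¹ ∈ H) ∧ ∃ r ∈ R, a * s⁻¹ * r⁻¹ ∈ H) (g : G) :
    ∃ r ∈ R, g * r⁻¹ ∈ H := by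
  induction hS ▸ mem_top g using closure_induction_right with
  | one => exact ⟨1, hR1, by simp⟩
  | mul_right g _ s hs ih =>
    obtain ⟨r, hr, hgr⟩ := ih
    obtain ⟨r', hr', hrr'⟩ := (hR r hr s hs).1
    exact ⟨r', hr', by simpa [mul_assoc] using H.mul_mem hgr hrr'⟩
  | mul_inv_cancel g _ s hs ih =>
    obtain ⟨r, hr, hgr⟩ := ih
    obtain ⟨r', hr', hrr'⟩ := (hR r hr s hs).2
    exact ⟨r', hr', by simpa [mul_assoc] using H.mul_mem hgr hrr'⟩

section CayleyEdges

variable [DecidableEq G]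

/-- The pairs `(r, s)` whose Schreier generator `r s (rep (r s))⁻¹` is trivial when `R` is a
transversal containing `1`. -/
def cayleyEdges (R S : Finset G) : Finset (G × G) :=
  {p ∈ R ×ˢ S | p.1 * p.2 ∈ R}

theorem cayleyEdges_mono {R R' : Finset G} (h : R ⊆ R') (S : Finset G) :
    cayleyEdges R S ⊆ cayleyEdges R' S := by
  intro p hp
  simp only [cayleyEdges, Finset.mem_filter, Finset.mem_product] at hp ⊢
  exact ⟨⟨h hp.1.1, hp.1.2⟩, h hp.2⟩

theorem exists_card_cayleyEdges_lt {R S : Finset G} (hS : closure (S : Set G) = ⊤) (hR1 : 1 ∈ R)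
    (hR : ¬ ∀ g, ∃ r ∈ R, g * r⁻¹ ∈ H) :
    ∃ x, (∀ r ∈ R, x * r⁻¹ ∉ H) ∧ #(cayleyEdges R S) < #(cayleyEdges (insert x R) S) := by
  have hnew : ∀ x, (∀ r ∈ R, x * r⁻¹ ∉ H) → x ∉ R := fun x hx hxR => hx x hxR (by simp)
  have hlt : ∀ x, ∀ p ∈ cayleyEdges (insert x R) S, p ∉ cayleyEdges R S →
      #(cayleyEdges R S) < #(cayleyEdges (insert x R) S) := fun x p hp hpR =>
    Finset.card_lt_card <| (Finset.ssubset_iff_of_subset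
      (cayleyEdges_mono (Finset.subset_insert x R) S)).mpr ⟨p, hp, hpR⟩
  obtain ⟨a, ha, s, hs, hout⟩ : ∃ a ∈ R, ∃ s ∈ S,
      (∀ r ∈ R, a * s * r⁻¹ ∉ H) ∨ ∀ r ∈ R, a * s⁻¹ * r⁻¹ ∉ H := by
    contrapose! hR
    exact exists_mul_inv_mem_of_forall_mul_mem H hS hR1 hR
  rcases hout with hout | hout
  · refine ⟨a * s, hout, hlt _ (a, s) ?_ ?_⟩
    · simp [cayleyEdges, ha, hs]
    · simp [cayleyEdges, hnew _ hout]
  · refine ⟨a * s⁻¹, hout, hlt _ (a * s⁻¹, s) ?_ ?_⟩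
    · simp [cayleyEdges, ha, hs]
    · simp [cayleyEdges, hnew _ hout]

theorem exists_isComplement_card_le_card_cayleyEdges [H.FiniteIndex] {S : Finset G}
    (hS : closure (S : Set G) = ⊤) :
    ∃ R : Finset G, IsComplement (H : Set G) R ∧ 1 ∈ R ∧ #R ≤ #(cayleyEdges R S) + 1 := by
  by_contra hne
  suffices grow : ∀ k, ∃ R : Finset G, 1 ∈ R ∧ (∀ a ∈ R, ∀ b ∈ R, a * b⁻¹ ∈ H → a = b) ∧
      #R ≤ #(cayleyEdges R S) + 1 ∧ k ≤ #R by
    obtain ⟨R, -, hR, -, hk⟩ := grow (H.index + 1)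
    have := card_le_index_of_mul_inv_mem H hR
    omega
  intro k
  induction k with
  | zero => exact ⟨{1}, by simp, by simp, by simp, by simp⟩
  | succ k ih =>
    obtain ⟨R, hR1, hR, hcard, hk⟩ := ih
    have hcover : ¬ ∀ g, ∃ r ∈ R, g * r⁻¹ ∈ H := by
      refine fun hcover => hne ⟨R, ?_, hR1, hcard⟩
      refine isComplement_iff_existsUnique_mul_inv_mem.mpr fun g => ?_
      obtain ⟨r, hr, hgr⟩ := hcover g
      refine ⟨⟨r, hr⟩, hgr, fun r' hgr' => Subtype.ext (hR _ r'.2 _ hr ?_)⟩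
      simpa [mul_assoc] using H.mul_mem (H.inv_mem hgr') hgr
    obtain ⟨x, hx, hlt⟩ := exists_card_cayleyEdges_lt H hS hR1 hcover
    have hxR : x ∉ R := fun hxR => hx x hxR (by simp)
    refine ⟨insert x R, Finset.mem_insert_of_mem hR1, ?_, ?_, ?_⟩
    · simp only [Finset.mem_insert]
      rintro a (rfl | ha) b (rfl | hb) hab
      · rfl
      · exact (hx b hb hab).elim
      · exact (hx a ha (by simpa using H.inv_mem hab)).elim
      · exact hR a ha b hb hab
    · rw [Finset.card_insert_of_notMem hxR]; omega
    · rw [Finset.card_insert_of_notMem hxR]; omega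

end CayleyEdges

theorem exists_closure_eq_card_add_index_le [H.FiniteIndex] {S : Finset G}
    (hS : closure (S : Set G) = ⊤) :
    ∃ T : Finset G, closure (T : Set G) = H ∧ #T + H.index ≤ H.index * #S + 1 := by
  classical
  obtain ⟨R, hR, hR1, hRE⟩ := exists_isComplement_card_le_card_cayleyEdges H hS
  have hRcard : #R = H.index := by simpa using hR.card_right
  let ψ : G × G → G := fun p => p.1 * p.2 * (hR.toRightFun (p.1 * p.2) : G)⁻¹
  refine ⟨((R ×ˢ S) \ cayleyEdges R S).image ψ, le_antisymm ?_ ?_, ?_⟩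
  · rw [closure_le, Finset.coe_image]
    rintro - ⟨p, -, rfl⟩
    exact hR.mul_inv_toRightFun_mem _
  · rw [← closure_mul_image_eq hR (by simpa using hR1) hS, closure_le]
    rintro - ⟨-, ⟨a, ha, s, hs, rfl⟩, rfl⟩
    by_cases has : a * s ∈ R
    · have := hR.toRightFun_coe ⟨a * s, has⟩
      simp_all
    · refine subset_closure (Finset.mem_coe.mpr (Finset.mem_image.mpr ⟨(a, s), ?_, rfl⟩))
      simp_all [cayleyEdges]
  · have hsub : cayleyEdges R S ⊆ R ×ˢ S := Finset.filter_subset _ _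
    have hT := (Finset.card_image_le (f := ψ) (s := (R ×ˢ S) \ cayleyEdges R S)).trans_eq
      (Finset.card_sdiff_of_subset hsub)
    have := Finset.card_le_card hsub
    rw [Finset.card_product, hRcard] at hT this
    omega

end Subgroup

section Rank

open Subgroup

variable {G G' : Type*} [Group G] [Group G']

theorem rk_le_card {H : Subgroup G} {S : Finset G} (h : closure (S : Set G) = H) : rk H ≤ #S :=
  sInf_le ⟨S, h, rfl⟩

theorem exists_closure_eq_card_eq_rk {H : Subgroup G} (h : rk H ≠ ⊤) :
    ∃ S : Finset G, closure (S : Set G) = H ∧ #S = rk H := by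
  have hne : {n : ℕ∞ | ∃ S : Finset G, closure (S : Set G) = H ∧ n = #S}.Nonempty := by
    by_contra hempty
    exact h (by rw [rk, Set.not_nonempty_iff_eq_empty.mp hempty, sInf_empty])
  obtain ⟨S, hS, hcard⟩ := csInf_mem hne
  exact ⟨S, hS, hcard.symm⟩

theorem fg_iff_rk_ne_top {H : Subgroup G} : H.FG ↔ rk H ≠ ⊤ := by
  refine ⟨fun ⟨S, hS⟩ => ne_top_of_le_ne_top (ENat.natCast_ne_top #S) (rk_le_card hS), fun h => ?_⟩
  obtain ⟨S, hS, -⟩ := exists_closure_eq_card_eq_rk h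
  exact ⟨S, hS⟩

theorem rk_map_le (f : G →* G') (H : Subgroup G) : rk (H.map f) ≤ rk H := by
  classical
  by_cases h : rk H = ⊤
  · simp [h]
  obtain ⟨S, hS, hcard⟩ := exists_closure_eq_card_eq_rk h
  calc rk (H.map f) ≤ #(S.image f) :=
        rk_le_card (by rw [Finset.coe_image, ← MonoidHom.map_closure, hS])
    _ ≤ #S := by exact_mod_cast Finset.card_image_le
    _ = rk H := hcard

theorem rk_map_of_injective {f : G →* G'} (hf : Function.Injective f) (H : Subgroup G) :
    rk (H.map f) = rk H := by
  classical
  refine le_antisymm (rk_map_le f H) ?_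
  by_cases h : rk (H.map f) = ⊤
  · simp [h]
  obtain ⟨S, hS, hcard⟩ := exists_closure_eq_card_eq_rk h
  have hSf : (S.preimage f hf.injOn).image f = S := by
    rw [Finset.image_preimage, Finset.filter_true_of_mem]
    intro s hs
    exact (mem_map.mp (hS ▸ subset_closure hs)).imp fun _ => And.right
  calc rk H ≤ #(S.preimage f hf.injOn) := by
        refine rk_le_card (map_injective hf ?_)
        rw [MonoidHom.map_closure, ← Finset.coe_image, hSf, hS]
    _ = #S := by rw [← Finset.card_image_of_injective _ hf, hSf]
    _ = rk (H.map f) := hcard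

theorem rk_subgroupOf (H K : Subgroup G) : rk (H.subgroupOf K) = rk (H ⊓ K) := by
  rw [← rk_map_of_injective K.subtype_injective, subgroupOf_map_subtype]

theorem rk_sup_le (H K : Subgroup G) : rk (H ⊔ K) ≤ rk H + rk K := by
  classical
  by_cases hH : rk H = ⊤
  · simp [hH]
  by_cases hK : rk K = ⊤
  · simp [hK]
  obtain ⟨S, hS, hScard⟩ := exists_closure_eq_card_eq_rk hH
  obtain ⟨T, hT, hTcard⟩ := exists_closure_eq_card_eq_rk hK
  calc rk (H ⊔ K) ≤ #(S ∪ T) :=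
        rk_le_card (by rw [Finset.coe_union, Subgroup.closure_union, hS, hT])
    _ ≤ #S + #T := by exact_mod_cast Finset.card_union_le S T
    _ = rk H + rk K := by rw [hScard, hTcard]

theorem rk_le_index_mul_rk_top_sub_one_add_one (H : Subgroup G) [H.FiniteIndex] :
    rk H ≤ H.index * (rk (⊤ : Subgroup G) - 1) + 1 := by
  classical
  by_cases htop : rk (⊤ : Subgroup G) = ⊤
  · simp [htop, ENat.top_sub_one, ENat.mul_top (Nat.cast_ne_zero.mpr FiniteIndex.index_ne_zero)]
  obtain ⟨S, hS, hcard⟩ := exists_closure_eq_card_eq_rk htop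
  obtain ⟨T, hT, hTcard⟩ := H.exists_closure_eq_card_add_index_le hS
  have hn := FiniteIndex.index_ne_zero (H := H)
  have hT' : #T ≤ H.index * (#S - 1) + 1 := by
    rcases Nat.eq_zero_or_pos #S with h0 | hpos
    · rw [h0] at hTcard ⊢; omega
    · rw [Nat.mul_sub_one]
      have := Nat.le_mul_of_pos_right H.index hpos
      omega
  calc rk H ≤ #T := rk_le_card hT
    _ ≤ ((H.index * (#S - 1) + 1 : ℕ) : ℕ∞) := by exact_mod_cast hT'
    _ = H.index * (rk (⊤ : Subgroup G) - 1) + 1 := by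
      rw [← hcard]; push_cast [ENat.natCast_sub]; rfl

theorem rk_inf_le_relIndex_mul_rk_sub_one_add_one (H K : Subgroup G)
    [(H.subgroupOf K).FiniteIndex] : rk (H ⊓ K) ≤ H.relIndex K * (rk K - 1) + 1 := by
  have h := rk_le_index_mul_rk_top_sub_one_add_one (H.subgroupOf K)
  rwa [rk_subgroupOf, ← rk_map_of_injective K.subtype_injective, ← MonoidHom.range_eq_map,
    range_subtype] at h

theorem intrk_le_rk {Λ Θ : Subgroup G} (h : Λ ≤ Θ) : intrk Λ ≤ rk Θ :=
  sInf_le ⟨Θ, h, rfl⟩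

theorem exists_le_rk_eq_intrk (Λ : Subgroup G) : ∃ Θ : Subgroup G, Λ ≤ Θ ∧ rk Θ = intrk Λ := by
  obtain ⟨Θ, hΘ, h⟩ := csInf_mem (⟨rk ⊤, ⊤, le_top, rfl⟩ :
    {n : ℕ∞ | ∃ Θ : Subgroup G, Λ ≤ Θ ∧ n = rk Θ}.Nonempty)
  exact ⟨Θ, hΘ, h.symm⟩

theorem intrk_le_genrk {Λ : Subgroup G} (h : Λ.FG) : intrk Λ ≤ genrk G :=
  le_sSup ⟨Λ, h, rfl⟩

theorem genrk_le_genrk_add_index_sub_one (Λ : Subgroup G) [Λ.FiniteIndex] :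
    genrk G ≤ genrk Λ + Λ.index - 1 := by
  refine sSup_le ?_
  rintro _ ⟨M, hM, rfl⟩
  have hN : (M.subgroupOf Λ).FG := by
    rw [fg_iff_rk_ne_top, rk_subgroupOf, inf_comm]
    refine ne_top_of_le_ne_top ?_ (rk_inf_le_relIndex_mul_rk_sub_one_add_one Λ M)
    lift rk M to ℕ using fg_iff_rk_ne_top.mp hM with m
    norm_cast
    exact ENat.natCast_ne_top _
  obtain ⟨Θ, hNΘ, hΘ⟩ := exists_le_rk_eq_intrk (M.subgroupOf Λ)
  obtain ⟨R, hR, hMR⟩ := exists_finset_card_add_one_eq_relIndex_le_sup Λ M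
  have hΛM : Λ ⊓ M ≤ Θ.map Λ.subtype := by
    rw [inf_comm, ← subgroupOf_map_subtype]
    exact map_mono hNΘ
  have hRn : (#R : ℕ∞) ≤ Λ.index - 1 := by
    have := Λ.relIndex_le_index M
    rw [← ENat.natCast_one, ← ENat.natCast_sub]
    exact_mod_cast (by omega : #R ≤ Λ.index - 1)
  calc intrk M ≤ rk (Θ.map Λ.subtype ⊔ closure (R : Set G)) :=
        intrk_le_rk (hMR.trans (sup_le_sup_right hΛM _))
    _ ≤ rk Θ + #R := (rk_sup_le _ _).trans (add_le_add (rk_map_le _ _) (rk_le_card rfl))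
    _ ≤ genrk Λ + (Λ.index - 1) := add_le_add (hΘ ▸ intrk_le_genrk hN) hRn
    _ = genrk Λ + Λ.index - 1 :=
        ((ENat.addLECancellable_of_ne_top ENat.one_ne_top).add_tsub_assoc_of_le
          (by exact_mod_cast Nat.one_le_iff_ne_zero.mpr FiniteIndex.index_ne_zero) _).symm

theorem genrk_le_index_mul_genrk_sub_one_add_one (Λ : Subgroup G) [Λ.FiniteIndex] :
    genrk Λ ≤ Λ.index * (genrk G - 1) + 1 := by
  refine sSup_le ?_
  rintro _ ⟨M, hM, rfl⟩
  obtain ⟨Θ, hMΘ, hΘ⟩ := exists_le_rk_eq_intrk (M.map Λ.subtype)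
  have hΘG : rk Θ ≤ genrk G := hΘ ▸ intrk_le_genrk <|
    fg_iff_rk_ne_top.mpr (ne_top_of_le_ne_top (fg_iff_rk_ne_top.mp hM) (rk_map_le _ _))
  have hM : M ≤ Θ.subgroupOf Λ := fun x hx => mem_subgroupOf.mpr (hMΘ (mem_map_of_mem _ hx))
  calc intrk M ≤ rk (Θ.subgroupOf Λ) := intrk_le_rk hM
    _ = rk (Λ ⊓ Θ) := by rw [rk_subgroupOf, inf_comm]
    _ ≤ Λ.relIndex Θ * (rk Θ - 1) + 1 := rk_inf_le_relIndex_mul_rk_sub_one_add_one Λ Θ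
    _ ≤ Λ.index * (genrk G - 1) + 1 := by
        gcongr
        exact_mod_cast Λ.relIndex_le_index Θ

end Rank

theorem genrk_finite_index_general {Γ : Type*} [Group Γ] (Λ : Subgroup Γ)
    [Λ.FiniteIndex] :
    genrk Γ ≤ genrk ↥Λ + (Λ.index : ℕ∞) - 1 ∧
    genrk ↥Λ ≤ (Λ.index : ℕ∞) * (genrk Γ - 1) + 1 :=
  ⟨genrk_le_genrk_add_index_sub_one Λ, genrk_le_index_mul_genrk_sub_one_add_one Λ⟩

/-- general rank and finite-index subgroups. -/
theorem genrk_finite_index {Γ : Type*} [Group Γ] [Nontrivial Γ] (Λ : Subgroup Γ)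
    [Λ.FiniteIndex] :
    genrk Γ ≤ genrk ↥Λ + (Λ.index : ℕ∞) - 1 ∧
    genrk ↥Λ ≤ (Λ.index : ℕ∞) * (genrk Γ - 1) + 1 :=
  genrk_finite_index_general Λ
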